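/- arXiv:2004.10090 — 8 statements merged into one kernel-verified Lean document; each statement's English description precedes it below -/
import Mathlib

section
/- Let ε, s ∈ (0,1), set ξ = s·ε/(1+ε), and let R > 0. Let N be a nonnegative integer, and let r_0, r_1, …, r_N and L_0, L_1, …, L_{N−1} be nonnegative real numbers such that r_0 = 0, r_i ≤ R for every 0 ≤ i ≤ N, and for every 0 ≤ i ≤ N−1 both r_{i+1} ≥ √(r_i² + L_i²) and r_{i+1} ≥ (1+ε)·R − L_i − ξ·r_i hold. Then N < 2/((1−s)·ε). -/
set_option maxHeartbeats 2000000 in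
/-- The recurrence underlying the Bădoiu–Clarkson greedy core-set construction with
approximate centers: if `r 0 = 0`, all `r i ≤ R`, all `r i` and `L i` are nonnegative, and
for every step both `r (i+1) ≥ √(r i ^ 2 + L i ^ 2)` and
`r (i+1) ≥ (1+ε) R - L i - ξ r i` with `ξ = s ε / (1+ε)`, then the number of steps `N`
satisfies `N < 2 / ((1-s) ε)`. -/
theorem coreset_iteration_bound
    (ε s R : ℝ) (hε : ε ∈ Set.Ioo (0 : ℝ) 1) (hs : s ∈ Set.Ioo (0 : ℝ) 1) (hR : 0 < R)
    (N : ℕ) (r L : ℕ → ℝ)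
    (hr0 : r 0 = 0)
    (hrnn : ∀ i, i ≤ N → 0 ≤ r i)
    (hLnn : ∀ i, i < N → 0 ≤ L i)
    (hrR : ∀ i, i ≤ N → r i ≤ R)
    (hsqrt : ∀ i, i < N → Real.sqrt ((r i) ^ 2 + (L i) ^ 2) ≤ r (i + 1))
    (hstep : ∀ i, i < N → (1 + ε) * R - L i - (s * ε / (1 + ε)) * r i ≤ r (i + 1)) :
    (N : ℝ) < 2 / ((1 - s) * ε) := by
  obtain ⟨hε0, hε1⟩ := hε
  obtain ⟨hs0, hs1⟩ := hs
  have h1ε : (0:ℝ) < 1 + ε := by linarith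
  set ξ : ℝ := s * ε / (1 + ε) with hξdef
  have hξ0 : 0 < ξ := div_pos (mul_pos hs0 hε0) h1ε
  have hξε : ξ < ε := by
    rw [hξdef, div_lt_iff₀ h1ε]; nlinarith
  have hξ1 : ξ < 1 := lt_trans hξε hε1
  have hξmul : ξ * (1 + ε) = s * ε := by
    rw [hξdef]; field_simp
  set K : ℝ := (1 + ε) * R with hK
  have hK0 : 0 < K := mul_pos h1ε hR
  set H : ℕ → ℝ := fun i => K - (1 + ξ) * r i with hH
  have hHlow : ∀ i, i ≤ N → (ε - ξ) * R ≤ H i := by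
    intro i hi
    have h1 := hrR i hi
    simp only [hH, hK]
    nlinarith [mul_nonneg (show (0:ℝ) ≤ 1 + ξ by linarith) (sub_nonneg.2 h1)]
  have hHup : ∀ i, i ≤ N → H i ≤ K := by
    intro i hi
    have h1 := hrnn i hi
    simp only [hH]
    nlinarith
  -- key one-step estimate
  have hstep2 : ∀ i, i < N → (H i)^2 ≤ 2 * K * (r (i+1) - r i) := by
    intro i hi
    have ha : 0 ≤ r i := hrnn i (le_of_lt hi)
    have hL : 0 ≤ L i := hLnn i hi
    have hb0 : 0 ≤ r (i+1) := hrnn (i+1) hi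
    have hsq : (r i)^2 + (L i)^2 ≤ (r (i+1))^2 := by
      have hx : (0:ℝ) ≤ (r i)^2 + (L i)^2 := by positivity
      have h1 := hsqrt i hi
      nlinarith [Real.sq_sqrt hx, Real.sqrt_nonneg ((r i)^2 + (L i)^2)]
    have hba : r i ≤ r (i+1) := by nlinarith
    have h2 := hstep i hi
    by_cases hcase : r (i+1) < K - ξ * r i
    · have hL2 : K - ξ * r i - r (i+1) ≤ L i := by linarith
      have hsq2 : (K - ξ * r i - r (i+1))^2 ≤ (L i)^2 := by nlinarith
      simp only [hH]
      nlinarith [mul_nonneg (mul_nonneg hξ0.le ha) (sub_nonneg.2 hba)]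
    · push_neg at hcase
      have hHi : H i ≤ r (i+1) - r i := by simp only [hH]; nlinarith [mul_nonneg hξ0.le ha]
      have h3 := hHup i (le_of_lt hi)
      have h4 : 0 ≤ H i :=
        le_trans (mul_pos (sub_pos.2 hξε) hR).le (hHlow i hi.le)
      have hd : 0 ≤ r (i+1) - r i := le_trans h4 hHi
      have e1 : H i * H i ≤ H i * (r (i+1) - r i) := mul_le_mul_of_nonneg_left hHi h4
      have e2 : H i * (r (i+1) - r i) ≤ K * (r (i+1) - r i) :=
        mul_le_mul_of_nonneg_right h3 hd
      have e3 : 0 ≤ K * (r (i+1) - r i) := mul_nonneg hK0.le hd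
      nlinarith [e1, e2, e3]
  -- potential-function induction
  have main : ∀ i, i ≤ N → H i * (2 + (i:ℝ) * (1 + ξ)) ≤ 2 * K := by
    intro i
    induction i with
    | zero =>
      intro _
      simp only [hH, hr0, Nat.cast_zero]
      ring_nf
      nlinarith
    | succ n ih =>
      intro hn
      have hnN : n < N := hn
      have h1 := ih (le_of_lt hnN)
      have h2 := hstep2 n hnN
      have hx := hHlow n hnN.le
      have hxK := hHup n hnN.le
      have hx0 : 0 ≤ H n := le_trans (mul_pos (sub_pos.2 hξε) hR).le hx
      have hn0 : (0:ℝ) ≤ (n:ℝ) := Nat.cast_nonneg n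
      have hnξ : (0:ℝ) ≤ (n:ℝ) * (1 + ξ) := mul_nonneg hn0 (by linarith)
      have hy' : H (n+1) = H n - (1+ξ) * (r (n+1) - r n) := by
        simp only [hH]; ring
      push_cast
      rw [hy']
      nlinarith [mul_nonneg (sub_nonneg.2 h1)
                   (sub_nonneg.2 (show (1+ξ) * H n ≤ 2*K by nlinarith)),
                 sq_nonneg ((1+ξ) * H n),
                 mul_nonneg (mul_nonneg (show (0:ℝ) ≤ 1+ξ by linarith)
                   (show (0:ℝ) ≤ 2 + (n:ℝ)*(1+ξ) + (1+ξ) by linarith))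
                   (sub_nonneg.2 h2),
                 hK0]
  -- conclude
  have hfin := main N le_rfl
  have hHN := hHlow N le_rfl
  have hNnn : (0:ℝ) ≤ (N:ℝ) := Nat.cast_nonneg N
  have hA0 : (0:ℝ) ≤ 2 + (N:ℝ) * (1 + ξ) := by nlinarith [mul_nonneg hNnn (show (0:ℝ) ≤ 1+ξ by linarith)]
  have h5 : (ε - ξ) * R * (2 + (N:ℝ) * (1 + ξ)) ≤ 2 * K :=
    le_trans (mul_le_mul_of_nonneg_right hHN hA0) hfin
  have h6 : (ε - ξ) * (2 + (N:ℝ) * (1 + ξ)) ≤ 2 * (1 + ε) := by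
    rw [hK] at h5
    have h5' : (ε - ξ) * (2 + (N:ℝ) * (1 + ξ)) * R ≤ 2 * (1 + ε) * R := by linarith [h5]
    exact le_of_mul_le_mul_right h5' hR
  have h7 : ((N:ℝ) * (ε - ξ)) * (1 + ξ) ≤ 2 * (1 + ξ) := by nlinarith [h6]
  have h8 : (N:ℝ) * (ε - ξ) ≤ 2 := le_of_mul_le_mul_right h7 (by linarith)
  have hlt : (1 - s) * ε < ε - ξ := by
    have hsε2 : 0 < s * ε * ε := by positivity
    nlinarith [hξmul]
  rw [lt_div_iff₀ (by nlinarith : (0:ℝ) < (1 - s) * ε)]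
  rcases Nat.eq_zero_or_pos N with hN | hN
  · subst hN; norm_num
  · have hN1 : (1:ℝ) ≤ (N:ℝ) := Nat.one_le_cast.mpr hN
    nlinarith [mul_le_mul_of_nonneg_right hlt.le hNnn,
               mul_le_mul_of_nonneg_right (sub_nonneg.2 hN1) (sub_pos.2 hlt).le, h8]
end

section
/- Let ε ∈ (0,1), ξ ∈ (0, ε/(1+ε)), λ ∈ [0, 1/(1+ε)], and ℓ ≥ 0. If λ' is a real number satisfying λ' ≥ √(λ² + ℓ²) and λ' ≥ 1 − ℓ − ξ·λ, then λ'² ≥ λ² + ((1−ξ)² − λ²)² / (4(1−ξ)²). -/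
/-- One-step improvement inequality in the Bădoiu–Clarkson core-set analysis with
approximate centers, in normalized form. -/
theorem coreset_one_step_improvement
    (ε ξ lam ell lam' : ℝ)
    (hε : ε ∈ Set.Ioo (0 : ℝ) 1)
    (hξ : ξ ∈ Set.Ioo (0 : ℝ) (ε / (1 + ε)))
    (hlam : lam ∈ Set.Icc (0 : ℝ) (1 / (1 + ε)))
    (hell : 0 ≤ ell)
    (h1 : Real.sqrt (lam ^ 2 + ell ^ 2) ≤ lam')
    (h2 : 1 - ell - ξ * lam ≤ lam') :
    lam ^ 2 + ((1 - ξ) ^ 2 - lam ^ 2) ^ 2 / (4 * (1 - ξ) ^ 2) ≤ lam' ^ 2 := by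
  obtain ⟨hε0, hε1⟩ := hε
  obtain ⟨hξ0, hξu⟩ := hξ
  obtain ⟨hlam0, hlamu⟩ := hlam
  have hεpos : (0:ℝ) < 1 + ε := by linarith
  have hξlt : ξ < ε / (1 + ε) := hξu
  have ha : lam < 1 - ξ := by
    have h1' : ξ * (1 + ε) < ε := by
      have := (lt_div_iff₀ hεpos).mp hξlt
      linarith [this]
    have h2' : lam * (1 + ε) ≤ 1 := by
      have := (le_div_iff₀ hεpos).mp hlamu
      linarith [this]
    nlinarith
  have hlam1 : lam ≤ 1 := by nlinarith
  have ha0 : (0:ℝ) < 1 - ξ := by linarith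
  have hl'0 : 0 ≤ lam' := le_trans (Real.sqrt_nonneg _) h1
  have hs : lam ^ 2 + ell ^ 2 ≤ lam' ^ 2 := by
    have := Real.sq_sqrt (by positivity : (0:ℝ) ≤ lam ^ 2 + ell ^ 2)
    nlinarith [Real.sqrt_nonneg (lam ^ 2 + ell ^ 2)]
  have h2' : 1 - ell - ξ ≤ lam' := by nlinarith
  have key : ((1 - ξ) ^ 2 - lam ^ 2) ^ 2 / (4 * (1 - ξ) ^ 2) ≤ lam' ^ 2 - lam ^ 2 := by
    rw [div_le_iff₀ (by positivity)]
    by_cases hc : (1 - ξ) ^ 2 - lam ^ 2 ≤ 2 * (1 - ξ) * ell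
    · have hA : 0 ≤ (1 - ξ) ^ 2 - lam ^ 2 := by nlinarith
      nlinarith [mul_self_le_mul_self hA hc,
        mul_le_mul_of_nonneg_left (by linarith : ell ^ 2 ≤ lam' ^ 2 - lam ^ 2)
          (by positivity : (0:ℝ) ≤ 4 * (1 - ξ) ^ 2)]
    · push_neg at hc
      have hle : lam' ^ 2 ≥ (1 - ξ - ell) ^ 2 := by
        have hpos : 0 ≤ 1 - ξ - ell := by nlinarith
        nlinarith
      nlinarith [sq_nonneg ((1-ξ)^2 - lam^2 - 2*(1-ξ)*ell)]
  linarith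
end

section
/- Let μ, μ' ∈ [0,1) with μ' ≥ (1+μ²)/2. Then 1/(1−μ') > 1/(1−μ) + 1/2. -/
/-- Potential-function step in the Bădoiu–Clarkson core-set analysis: if
`μ, μ' ∈ [0,1)` and `μ' ≥ (1 + μ²)/2`, then `1/(1-μ') > 1/(1-μ) + 1/2`. -/
theorem coreset_potential_step
    (μ μ' : ℝ) (hμ : μ ∈ Set.Ico (0 : ℝ) 1) (hμ' : μ' ∈ Set.Ico (0 : ℝ) 1)
    (h : (1 + μ ^ 2) / 2 ≤ μ') :
    1 / (1 - μ) + 1 / 2 < 1 / (1 - μ') := by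
  obtain ⟨h0, h1⟩ := hμ
  obtain ⟨h0', h1'⟩ := hμ'
  have ha : (0:ℝ) < 1 - μ := by linarith
  have hb : (0:ℝ) < 1 - μ' := by linarith
  rw [div_add' _ _ _ ha.ne', div_lt_div_iff₀ (by positivity) hb]
  nlinarith [sq_nonneg (1 - μ), sq_nonneg μ, mul_pos ha hb]
end

section
/- Let P be a finite set of points in ℝ^d and let o ∈ ℝ^d be such that the distances ‖p−o‖ for p ∈ P are pairwise distinct. Let P_opt ⊆ P, let t be an integer with t ≤ |P|, and let Q be the t farthest points of P from o. Let A ⊆ P, let t' be an integer with t' ≤ |A|, and let Q' be the t' farthest points of A from o. If |A ∩ Q| ≤ t', then A ∩ Q ⊆ Q', and consequently Q' ∩ (P_opt ∩ Q) = A ∩ (P_opt ∩ Q). -/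
/-- Deterministic core of the Uniform-Adaptive Sampling lemma: the farthest-point
sets of `P` and of a subset `A ⊆ P` are nested. -/
theorem farthest_sets_nested
    {d : ℕ} (P : Finset (EuclideanSpace ℝ (Fin d))) (o : EuclideanSpace ℝ (Fin d))
    (hdist : ∀ p ∈ P, ∀ q ∈ P, p ≠ q → dist p o ≠ dist q o)
    (Popt : Finset (EuclideanSpace ℝ (Fin d))) (hPopt : Popt ⊆ P)
    (t : ℕ) (ht : t ≤ P.card)
    (Q : Finset (EuclideanSpace ℝ (Fin d))) (hQP : Q ⊆ P) (hQcard : Q.card = t)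
    (hQfar : ∀ p ∈ Q, ∀ q ∈ P, q ∉ Q → dist q o < dist p o)
    (A : Finset (EuclideanSpace ℝ (Fin d))) (hAP : A ⊆ P)
    (t' : ℕ) (ht' : t' ≤ A.card)
    (Q' : Finset (EuclideanSpace ℝ (Fin d))) (hQ'A : Q' ⊆ A) (hQ'card : Q'.card = t')
    (hQ'far : ∀ p ∈ Q', ∀ q ∈ A, q ∉ Q' → dist q o < dist p o)
    (hcard : ((A : Set (EuclideanSpace ℝ (Fin d))) ∩ (Q : Set _)).ncard ≤ t') :
    (A : Set (EuclideanSpace ℝ (Fin d))) ∩ (Q : Set _) ⊆ (Q' : Set _) ∧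
      (Q' : Set (EuclideanSpace ℝ (Fin d))) ∩ ((Popt : Set _) ∩ (Q : Set _)) =
        (A : Set _) ∩ ((Popt : Set _) ∩ (Q : Set _)) := by
  classical
  have hcard' : (A ∩ Q).card ≤ t' := by
    have : ((A : Set (EuclideanSpace ℝ (Fin d))) ∩ (Q : Set _)).ncard
        = (A ∩ Q).card := by
      rw [← Finset.coe_inter, Set.ncard_coe_finset]
    omega
  have hsub : (A : Set (EuclideanSpace ℝ (Fin d))) ∩ (Q : Set _) ⊆ (Q' : Set _) := by
    intro p hp
    simp only [Set.mem_inter_iff, Finset.mem_coe] at hp ⊢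
    obtain ⟨hpA, hpQ⟩ := hp
    by_contra hpQ'
    -- Q' is not a subset of A ∩ Q
    have hnot : ¬ Q' ⊆ A ∩ Q := by
      intro hss
      have h1 : Q'.card < (A ∩ Q).card := by
        apply Finset.card_lt_card
        refine ⟨hss, fun hss' => hpQ' (hss' (Finset.mem_inter.mpr ⟨hpA, hpQ⟩))⟩
      omega
    obtain ⟨q, hqQ', hqn⟩ := Finset.not_subset.mp hnot
    have hqA : q ∈ A := hQ'A hqQ'
    have hqnQ : q ∉ Q := fun h => hqn (Finset.mem_inter.mpr ⟨hqA, h⟩)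
    have h1 : dist p o < dist q o := hQ'far q hqQ' p hpA hpQ'
    have h2 : dist q o < dist p o := hQfar p hpQ q (hAP hqA) hqnQ
    linarith
  refine ⟨hsub, ?_⟩
  ext x
  simp only [Set.mem_inter_iff, Finset.mem_coe]
  constructor
  · rintro ⟨h1, h2, h3⟩
    exact ⟨hQ'A h1, h2, h3⟩
  · rintro ⟨h1, h2, h3⟩
    exact ⟨hsub ⟨h1, h3⟩, h2, h3⟩
end

section
/- Let P be a set of n points in ℝ^d and let o ∈ ℝ^d be such that the distances ‖p−o‖ for p ∈ P are pairwise distinct. Let t be an integer with t < n, let Q be the t farthest points of P from o, and let l be the (t+1)-th largest distance from a point of P to o. Let B be a finite multiset of points of P (points may repeat), let k be an integer with k < |B|, and let l̃ be the (k+1)-th largest value of the multiset {‖b−o‖ : b ∈ B}. Let l' ≥ 0. If strictly more than k elements of B (counted with multiplicity) have distance to o greater than l', and at most k elements of B (counted with multiplicity) belong to Q, then l' ≤ l̃ ≤ l; in particular, the number of points of P outside the closed ball of radius l̃ centered at o is at most the number of points of P outside the closed ball of radius l' centered at o. -/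
/-- Deterministic core of the Sandwich Lemma. The multiset `B` of points of `P`
(with possible repetitions) is represented as an indexed family `B : Fin M → ℝ^d`. -/
theorem sandwich_deterministic
    {d : ℕ} (P : Finset (EuclideanSpace ℝ (Fin d))) (n : ℕ) (hn : P.card = n)
    (o : EuclideanSpace ℝ (Fin d))
    (hdist : ∀ p ∈ P, ∀ q ∈ P, p ≠ q → dist p o ≠ dist q o)
    (t : ℕ) (htn : t < n)
    (Q : Finset (EuclideanSpace ℝ (Fin d))) (hQP : Q ⊆ P) (hQcard : Q.card = t)
    (hQfar : ∀ p ∈ Q, ∀ q ∈ P, q ∉ Q → dist q o < dist p o)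
    (l : ℝ) (hlmem : ∃ p ∈ P, p ∉ Q ∧ dist p o = l)
    (hlmax : ∀ p ∈ P, p ∉ Q → dist p o ≤ l)
    (M : ℕ) (B : Fin M → EuclideanSpace ℝ (Fin d)) (hBP : ∀ j, B j ∈ P)
    (k : ℕ) (hkM : k < M)
    (ltil : ℝ)
    (hmem : ∃ j : Fin M, dist (B j) o = ltil)
    (hgt : ({j : Fin M | ltil < dist (B j) o}).ncard ≤ k)
    (hge : k + 1 ≤ ({j : Fin M | ltil ≤ dist (B j) o}).ncard)
    (l' : ℝ) (hl' : 0 ≤ l')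
    (hmore : k < ({j : Fin M | l' < dist (B j) o}).ncard)
    (hQcount : ({j : Fin M | B j ∈ Q}).ncard ≤ k) :
    l' ≤ ltil ∧ ltil ≤ l ∧
      ({p : EuclideanSpace ℝ (Fin d) | p ∈ P ∧ ltil < dist p o}).ncard ≤
        ({p : EuclideanSpace ℝ (Fin d) | p ∈ P ∧ l' < dist p o}).ncard := by
  have h1 : l' ≤ ltil := by
    by_contra h
    push_neg at h
    have hsub : {j : Fin M | l' < dist (B j) o} ⊆ {j : Fin M | ltil < dist (B j) o} := by
      intro j hj
      exact lt_of_lt_of_le h (le_of_lt hj)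
    have := Set.ncard_le_ncard hsub (Set.toFinite _)
    omega
  have h2 : ltil ≤ l := by
    by_contra h
    push_neg at h
    have hsub : {j : Fin M | ltil ≤ dist (B j) o} ⊆ {j : Fin M | B j ∈ Q} := by
      intro j hj
      by_contra hq
      have := hlmax (B j) (hBP j) hq
      simp only [Set.mem_setOf_eq] at hj
      linarith
    have := Set.ncard_le_ncard hsub (Set.toFinite _)
    omega
  refine ⟨h1, h2, ?_⟩
  apply Set.ncard_le_ncard
  · intro p hp
    exact ⟨hp.1, lt_of_le_of_lt h1 hp.2⟩
  · exact Set.Finite.subset P.finite_toSet (fun p hp => hp.1)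
end

section
/- Let P be a set of n points in ℝ^d whose distances to a point o ∈ ℝ^d are pairwise distinct, let γ, δ, ε ∈ (0,1) with t := (1+δ)γn an integer and t < n, let P_opt ⊆ P be nonempty with |P_opt| = (1−γ)n, and let R := inf over c ∈ ℝ^d of max_{p ∈ P_opt} ‖p−c‖ (the minimum enclosing ball radius of P_opt). Let l be the (t+1)-th largest distance from a point of P to o. Then at least one of the following holds: (1) l ≤ (1+ε)R, in which case the closed ball of radius l centered at o contains at least (1−(1+δ)γ)n points of P and has radius at most (1+ε)R; or (2) for every q ∈ P with ‖q−o‖ ≥ l, every ξ ≥ 0, every c, c' ∈ ℝ^d and every r, r' ≥ 0 such that ‖o−c‖ ≤ ξ·r and ‖q−c'‖ ≤ r', one has r' > (1+ε)R − ‖c−c'‖ − ξ·r. -/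
/-- Dichotomy for a candidate center `o` in the MEB-with-outliers core-set algorithm:
either the ball of radius `l` (the `(t+1)`-th largest distance) around `o` is already
a `(1+ε, 1+δ)` bi-criteria approximation, or the radius recursion
`r' > (1+ε)R - ‖c-c'‖ - ξr` holds for every admissible choice of `q, ξ, c, c', r, r'`. -/
theorem candidate_center_dichotomy
    {d : ℕ} (P : Finset (EuclideanSpace ℝ (Fin d))) (n : ℕ) (hn : P.card = n)
    (o : EuclideanSpace ℝ (Fin d))
    (hdist : ∀ p ∈ P, ∀ q ∈ P, p ≠ q → dist p o ≠ dist q o)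
    (γ δ ε : ℝ) (hγ : γ ∈ Set.Ioo (0 : ℝ) 1) (hδ : δ ∈ Set.Ioo (0 : ℝ) 1)
    (hε : ε ∈ Set.Ioo (0 : ℝ) 1)
    (t : ℕ) (ht : (t : ℝ) = (1 + δ) * γ * n) (htn : t < n)
    (Popt : Finset (EuclideanSpace ℝ (Fin d))) (hPoptP : Popt ⊆ P)
    (hPne : Popt.Nonempty) (hPoptcard : (Popt.card : ℝ) = (1 - γ) * n)
    (R : ℝ)
    (hR : R = ⨅ c : EuclideanSpace ℝ (Fin d), Popt.sup' hPne fun p => dist p c)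
    (l : ℝ) (hlmem : ∃ p ∈ P, dist p o = l)
    (hlcount : ({p : EuclideanSpace ℝ (Fin d) | p ∈ P ∧ l < dist p o}).ncard = t) :
    (l ≤ (1 + ε) * R ∧
        (1 - (1 + δ) * γ) * n ≤
          (({p : EuclideanSpace ℝ (Fin d) | p ∈ P ∧ dist p o ≤ l}).ncard : ℝ)) ∨
      (∀ q ∈ P, l ≤ dist q o → ∀ ξ : ℝ, 0 ≤ ξ →
        ∀ c c' : EuclideanSpace ℝ (Fin d), ∀ r r' : ℝ, 0 ≤ r → 0 ≤ r' →
          dist o c ≤ ξ * r → dist q c' ≤ r' →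
            (1 + ε) * R - dist c c' - ξ * r < r') := by
  by_cases hl : l ≤ (1 + ε) * R
  · left
    refine ⟨hl, ?_⟩
    have hB : ({p : EuclideanSpace ℝ (Fin d) | p ∈ P ∧ dist p o ≤ l})
        = ↑(P.filter fun p => dist p o ≤ l) := by ext p; simp
    have hA : ({p : EuclideanSpace ℝ (Fin d) | p ∈ P ∧ l < dist p o})
        = ↑(P.filter fun p => l < dist p o) := by ext p; simp
    rw [hB, Set.ncard_coe_finset]
    rw [hA, Set.ncard_coe_finset] at hlcount
    have hsum : (P.filter fun p => dist p o ≤ l).card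
        + (P.filter fun p => l < dist p o).card = n := by
      rw [← hn]
      have := Finset.card_filter_add_card_filter_not
        (s := P) (p := fun p => dist p o ≤ l)
      simpa [not_le] using this
    have hcardR : ((P.filter fun p => dist p o ≤ l).card : ℝ) = (n : ℝ) - t := by
      have : (P.filter fun p => dist p o ≤ l).card = n - t := by omega
      rw [this]
      push_cast [Nat.cast_sub htn.le]
      ring
    rw [hcardR, ht]
    ring_nf
    linarith [le_refl ((n:ℝ))]
  · right
    push_neg at hl
    intro q hq hql ξ hξ c c' r r' hr hr' hoc hqc'
    have h4 : dist q o ≤ dist q c' + dist c' c + dist c o :=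
      dist_triangle4 q c' c o
    have : dist c' c = dist c c' := dist_comm c' c
    have : dist c o = dist o c := dist_comm c o
    have hql' : (1 + ε) * R < dist q o := lt_of_lt_of_le hl hql
    have := dist_comm c' c
    have := dist_comm c o
    linarith
end

section
/- Let d ≥ 1, let n be a positive integer, and let γ ∈ (0, 1/2) be such that γn and (1−γ)n are integers with (1−γ)n ≥ 2. Let q_a, q_b, q_c ∈ ℝ^d be collinear points with q_b strictly between q_a and q_c, and set x := ‖q_a − q_b‖ > 0 and y := ‖q_b − q_c‖ > 0. Let P be the indexed family of n points in ℝ^d consisting of one copy of q_a, (1−γ)n − 1 copies of q_b, and γn copies of q_c. Then: (a) the closed ball centered at the midpoint of q_a and q_b with radius x/2 contains at least (1−γ)n points of P (counted with multiplicity); and (b) for every point o on the segment joining q_b and q_c and every r ≥ 0 such that the closed ball of radius r centered at o contains at least (1−γ)n points of P (counted with multiplicity), one has r ≥ min(x, y/2). -/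
/-- The hard instance for MEB with outliers showing that no approximation factor
below 2 is possible for algorithms whose sample misses the single point `q_a`:
(a) the ball of radius `x/2` around the midpoint of `q_a` and `q_b` covers at least
`(1-γ)n` points; (b) any ball centered on the segment `[q_b, q_c]` covering at least
`(1-γ)n` points has radius at least `min x (y/2)`. -/
theorem meb_outliers_lower_bound_instance
    (d : ℕ) (hd : 1 ≤ d) (n : ℕ) (hn : 0 < n)
    (γ : ℝ) (hγ : γ ∈ Set.Ioo (0 : ℝ) (1 / 2))
    (m : ℕ) (hm : (m : ℝ) = γ * n) (hnm : 2 ≤ n - m)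
    (qa qb qc : EuclideanSpace ℝ (Fin d)) (hbtw : Sbtw ℝ qa qb qc)
    (x y : ℝ) (hx : x = dist qa qb) (hy : y = dist qb qc)
    (P : Fin n → EuclideanSpace ℝ (Fin d))
    (hPa : ({i : Fin n | P i = qa}).ncard = 1)
    (hPb : ({i : Fin n | P i = qb}).ncard = n - m - 1)
    (hPc : ({i : Fin n | P i = qc}).ncard = m) :
    (1 - γ) * n ≤
        (({i : Fin n | dist (P i) (midpoint ℝ qa qb) ≤ x / 2}).ncard : ℝ) ∧
      ∀ o ∈ segment ℝ qb qc, ∀ r : ℝ, 0 ≤ r →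
        (1 - γ) * n ≤ (({i : Fin n | dist (P i) o ≤ r}).ncard : ℝ) →
        min x (y / 2) ≤ r := by
  obtain ⟨hγ0, hγ2⟩ := hγ
  have hab : qa ≠ qb := hbtw.ne_left.symm
  have hbc : qb ≠ qc := hbtw.ne_right
  have hac : qa ≠ qc := hbtw.left_ne_right
  have hmn : m + 2 ≤ n := by omega
  have h2m : 2 * m < n := by
    have : (m : ℝ) < n / 2 := by
      rw [hm]
      have : (0 : ℝ) < n := by exact_mod_cast hn
      nlinarith
    have : (2 * m : ℝ) < n := by push_cast; linarith
    exact_mod_cast this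
  have hcast : (1 - γ) * n = ((n - m : ℕ) : ℝ) := by
    rw [Nat.cast_sub (by omega)]; linarith [hm]
  set A := {i : Fin n | P i = qa} with hA
  set B := {i : Fin n | P i = qb} with hB
  set C := {i : Fin n | P i = qc} with hC
  have hdAB : Disjoint A B := by
    rw [Set.disjoint_left]; rintro i hi hi'
    exact hab (hi.symm.trans hi')
  have hdAC : Disjoint A C := by
    rw [Set.disjoint_left]; rintro i hi hi'
    exact hac (hi.symm.trans hi')
  have hdBC : Disjoint B C := by
    rw [Set.disjoint_left]; rintro i hi hi'
    exact hbc (hi.symm.trans hi')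
  have hABcard : (A ∪ B).ncard = n - m := by
    rw [Set.ncard_union_eq hdAB (Set.toFinite _) (Set.toFinite _), hPa, hPb]; omega
  constructor
  · -- part (a)
    have hsub : A ∪ B ⊆ {i : Fin n | dist (P i) (midpoint ℝ qa qb) ≤ x / 2} := by
      rintro i (hi | hi) <;> simp only [Set.mem_setOf_eq] at *
      · rw [hi, dist_left_midpoint, hx]
        rw [Real.norm_ofNat]
        ring_nf
        linarith [dist_nonneg (x := qa) (y := qb)]
      · rw [hi, midpoint_comm, dist_left_midpoint, hx, dist_comm qa qb]
        rw [Real.norm_ofNat]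
        ring_nf
        linarith [dist_nonneg (x := qb) (y := qa)]
    have := Set.ncard_le_ncard hsub (Set.toFinite _)
    rw [hABcard] at this
    rw [hcast]
    exact_mod_cast this
  · -- part (b)
    intro o ho r hr hcov
    have hcov' : n - m ≤ ({i : Fin n | dist (P i) o ≤ r}).ncard := by
      rw [hcast] at hcov; exact_mod_cast hcov
    set S := {i : Fin n | dist (P i) o ≤ r} with hS
    -- every point is qa, qb or qc
    have huniv : A ∪ B ∪ C = Set.univ := by
      apply Set.eq_of_subset_of_ncard_le (Set.subset_univ _)
      · rw [Set.ncard_univ, Nat.card_eq_fintype_card, Fintype.card_fin,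
          Set.ncard_union_eq (hdAC.union_left hdBC) (Set.toFinite _) (Set.toFinite _),
          hABcard, hPc]
        omega
    have hwbo : Wbtw ℝ qb o qc := mem_segment_iff_wbtw.mp ho
    have hdisto : dist qb o + dist o qc = dist qb qc :=
      dist_add_dist_of_mem_segment hwbo.mem_segment
    by_cases hAS : ∃ i ∈ S, P i = qa
    · -- qa is covered: r ≥ x
      obtain ⟨i, hiS, hiA⟩ := hAS
      have hwba : Wbtw ℝ qa qb o := hbtw.wbtw.trans_right_left hwbo
      have : dist qa qb + dist qb o = dist qa o :=
        dist_add_dist_of_mem_segment hwba.mem_segment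
      have hxr : x ≤ r := by
        have := hiS
        simp only [hS, Set.mem_setOf_eq, hiA] at this
        have hnn := dist_nonneg (x := qb) (y := o)
        linarith [hx ▸ le_refl x]
      exact le_trans (min_le_left _ _) hxr
    · -- no qa covered: S contains a qb point and a qc point
      push_neg at hAS
      have hSBC : S ⊆ B ∪ C := by
        intro i hi
        have : i ∈ A ∪ B ∪ C := huniv ▸ Set.mem_univ i
        rcases this with (hi' | hi') | hi'
        · exact absurd hi' (hAS i hi)
        · exact Or.inl hi'
        · exact Or.inr hi'
      have hSB : ∃ i ∈ S, P i = qb := by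
        by_contra hcon
        push_neg at hcon
        have : S ⊆ C := by
          intro i hi
          rcases hSBC hi with hi' | hi'
          · exact absurd hi' (hcon i hi)
          · exact hi'
        have := Set.ncard_le_ncard this (Set.toFinite _)
        rw [hPc] at this
        omega
      have hSC : ∃ i ∈ S, P i = qc := by
        by_contra hcon
        push_neg at hcon
        have : S ⊆ B := by
          intro i hi
          rcases hSBC hi with hi' | hi'
          · exact hi'
          · exact absurd hi' (hcon i hi)
        have := Set.ncard_le_ncard this (Set.toFinite _)
        rw [hPb] at this
        omega
      obtain ⟨i, hiS, hiB⟩ := hSB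
      obtain ⟨j, hjS, hjC⟩ := hSC
      simp only [hS, Set.mem_setOf_eq, hiB] at hiS
      simp only [hS, Set.mem_setOf_eq, hjC] at hjS
      have : y ≤ 2 * r := by
        rw [hy, ← hdisto]
        have := dist_comm qc o
        linarith [hjS, hiS, dist_comm o qc ▸ hjS]
      exact le_trans (min_le_right _ _) (by linarith)
end

section
/- Let S be a finite nonempty set of points in ℝ^d, let p ∈ S, and let q ∈ S satisfy ‖s − p‖ ≤ ‖q − p‖ for all s ∈ S, with q ≠ p. Let ℓ₀ be the line (one-dimensional affine subspace of ℝ^d) through p and q. Then for every line ℓ in ℝ^d, max_{s ∈ S} dist(s, ℓ₀) ≤ 4 · max_{s ∈ S} dist(s, ℓ), where dist denotes the Euclidean distance from a point to the line. -/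
open Metric RealInnerProductSpace

section AuxFourApprox

variable {E : Type*} [NormedAddCommGroup E] [InnerProductSpace ℝ E]

private lemma proj_contr' (v x : E) (hv : ‖v‖ = 1) :
    ‖x - ⟪x, v⟫ • v‖ ^ 2 = ‖x‖ ^ 2 - ⟪x, v⟫ ^ 2 := by
  rw [norm_sub_sq_real, real_inner_smul_right, norm_smul, hv]
  simp [abs_sq]
  ring

/-- Orthogonal projection onto the complement of a unit vector is a contraction. -/
private lemma proj_contr (v x : E) (hv : ‖v‖ = 1) : ‖x - ⟪x, v⟫ • v‖ ≤ ‖x‖ := by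
  have h := proj_contr' v x hv
  nlinarith [norm_nonneg (x - ⟪x, v⟫ • v), norm_nonneg x, sq_nonneg (⟪x, v⟫)]

private lemma proj_orth (v x : E) (hv : ‖v‖ = 1) :
    ⟪x - ⟪x, v⟫ • v, v⟫ = 0 := by
  rw [inner_sub_left, real_inner_smul_left, real_inner_self_eq_norm_sq, hv]
  ring

omit [InnerProductSpace ℝ E] in
private lemma le_infDist' {s : Set E} {x : E} {b : ℝ} (hs : s.Nonempty)
    (h : ∀ y ∈ s, b ≤ dist x y) : b ≤ infDist x s := by
  by_contra hlt
  push_neg at hlt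
  obtain ⟨y, hy, hxy⟩ := (infDist_lt_iff hs).1 hlt
  exact absurd (h y hy) (not_le.2 hxy)

private lemma norm_le_norm_add_of_inner_eq_zero (A B : E) (h : ⟪A, B⟫ = 0) :
    ‖A‖ ≤ ‖A + B‖ := by
  have := norm_add_sq_real A B
  nlinarith [norm_nonneg A, norm_nonneg (A + B), sq_nonneg ‖B‖]

private lemma aux_key (u v es ep : E) (r ta : ℝ)
    (hv : ‖v‖ = 1)
    (hes : ‖es‖ ≤ r) (hep : ‖ep‖ ≤ r)
    (huv : |ta| * ‖u - ⟪u, v⟫ • v‖ ≤ 2 * r) :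
    ‖(es + ta • u - ep) - ⟪es + ta • u - ep, v⟫ • v‖ ≤ 4 * r := by
  have hsplit : (es + ta • u - ep) - ⟪es + ta • u - ep, v⟫ • v
      = (es - ⟪es, v⟫ • v) + ta • (u - ⟪u, v⟫ • v) - (ep - ⟪ep, v⟫ • v) := by
    simp only [inner_sub_left, inner_add_left, real_inner_smul_left]
    module
  rw [hsplit]
  have h1 := proj_contr v es hv
  have h2 := proj_contr v ep hv
  calc ‖(es - ⟪es, v⟫ • v) + ta • (u - ⟪u, v⟫ • v) - (ep - ⟪ep, v⟫ • v)‖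
      ≤ ‖(es - ⟪es, v⟫ • v) + ta • (u - ⟪u, v⟫ • v)‖ + ‖ep - ⟪ep, v⟫ • v‖ :=
        norm_sub_le _ _
    _ ≤ ‖es - ⟪es, v⟫ • v‖ + ‖ta • (u - ⟪u, v⟫ • v)‖ + ‖ep - ⟪ep, v⟫ • v‖ := by
        gcongr; exact norm_add_le _ _
    _ ≤ r + 2 * r + r := by
        rw [norm_smul, Real.norm_eq_abs]
        have := h1.trans hes
        have := h2.trans hep
        gcongr
    _ = 4 * r := by ring

end AuxFourApprox

set_option maxHeartbeats 1000000 in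
/-- The line through an arbitrary point `p` of a finite set `S` and a farthest
point `q` of `S` from `p` is a 4-approximation for the line-fitting problem. -/
theorem line_through_farthest_point_four_approx
    {d : ℕ} (S : Finset (EuclideanSpace ℝ (Fin d))) (hS : S.Nonempty)
    (p q : EuclideanSpace ℝ (Fin d)) (hp : p ∈ S) (hq : q ∈ S)
    (hfar : ∀ s ∈ S, dist s p ≤ dist q p) (hqp : q ≠ p) :
    ∀ ℓ : AffineSubspace ℝ (EuclideanSpace ℝ (Fin d)),
      Module.finrank ℝ ℓ.direction = 1 →
      S.sup' hS (fun s =>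
          infDist s ((affineSpan ℝ {p, q} : AffineSubspace ℝ _) : Set _)) ≤
        4 * S.sup' hS (fun s => infDist s (ℓ : Set (EuclideanSpace ℝ (Fin d)))) := by
  intro ℓ hℓ
  -- ℓ is nonempty
  have hℓne : (ℓ : Set (EuclideanSpace ℝ (Fin d))).Nonempty := by
    rw [AffineSubspace.nonempty_iff_ne_bot]
    intro h
    rw [h, AffineSubspace.direction_bot] at hℓ
    simp at hℓ
  obtain ⟨c, hc⟩ := hℓne
  -- a unit vector spanning the direction of ℓ
  obtain ⟨v₀, hv₀ne, hv₀span⟩ := finrank_eq_one_iff'.mp hℓ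
  have hv₀E : (v₀ : EuclideanSpace ℝ (Fin d)) ≠ 0 := by
    simpa using Subtype.coe_injective.ne_iff.mpr hv₀ne
  obtain ⟨u, hu, hdir_mul⟩ :
      ∃ u : EuclideanSpace ℝ (Fin d), ‖u‖ = 1 ∧
        ∀ w : EuclideanSpace ℝ (Fin d), w ∈ ℓ.direction → ∃ t : ℝ, w = t • u := by
    refine ⟨‖(v₀ : EuclideanSpace ℝ (Fin d))‖⁻¹ • (v₀ : EuclideanSpace ℝ (Fin d)), ?_, ?_⟩
    · rw [norm_smul, norm_inv, norm_norm,
        inv_mul_cancel₀ (norm_ne_zero_iff.mpr hv₀E)]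
    · intro w hw
      obtain ⟨t, ht⟩ := hv₀span ⟨w, hw⟩
      refine ⟨t * ‖(v₀ : EuclideanSpace ℝ (Fin d))‖, ?_⟩
      have hcoe : t • (v₀ : EuclideanSpace ℝ (Fin d)) = w := congrArg Subtype.val ht
      rw [← hcoe, smul_smul, mul_assoc,
        mul_inv_cancel₀ (norm_ne_zero_iff.mpr hv₀E), mul_one]
  set r := S.sup' hS (fun s => infDist s (ℓ : Set (EuclideanSpace ℝ (Fin d)))) with hr_def
  -- every point of S is within r of its projection onto ℓ
  have hproj : ∀ x ∈ S, ‖(x - c) - ⟪x - c, u⟫ • u‖ ≤ r := by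
    intro x hx
    have h1 : ‖(x - c) - ⟪x - c, u⟫ • u‖
        ≤ infDist x (ℓ : Set (EuclideanSpace ℝ (Fin d))) := by
      apply le_infDist' ⟨c, hc⟩
      intro y hy
      have hyc : y - c ∈ ℓ.direction := by
        simpa [vsub_eq_sub] using AffineSubspace.vsub_mem_direction hy hc
      obtain ⟨t, ht⟩ := hdir_mul _ hyc
      have hxy : x - y = ((x - c) - ⟪x - c, u⟫ • u) + (⟪x - c, u⟫ - t) • u := by
        have hyct : y = c + t • u := by rw [← ht]; abel
        rw [hyct, sub_smul]; abel
      rw [dist_eq_norm, hxy]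
      apply norm_le_norm_add_of_inner_eq_zero
      rw [real_inner_smul_right, proj_orth u (x - c) hu, mul_zero]
    exact h1.trans (Finset.le_sup'
      (fun s => infDist s (ℓ : Set (EuclideanSpace ℝ (Fin d)))) hx)
  have hr0 : (0 : ℝ) ≤ r := by
    have h0 := Finset.le_sup'
      (fun s => infDist s (ℓ : Set (EuclideanSpace ℝ (Fin d)))) hp
    exact le_trans infDist_nonneg h0
  -- set up the line through p and q
  have hb : q - p ≠ 0 := sub_ne_zero.mpr hqp
  have hbn : (0 : ℝ) < ‖q - p‖ := norm_pos_iff.mpr hb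
  set v : EuclideanSpace ℝ (Fin d) := ‖q - p‖⁻¹ • (q - p) with hv_def
  have hv : ‖v‖ = 1 := by
    rw [hv_def, norm_smul, norm_inv, norm_norm, inv_mul_cancel₀ hbn.ne']
  -- the key angle bound : ‖q-p‖ * ‖u - ⟪u,v⟫ • v‖ ≤ 2r
  have hQu : ‖q - p‖ * ‖u - ⟪u, v⟫ • v‖ ≤ 2 * r := by
    have heq := hproj q hq
    have hep := hproj p hp
    have hw : ‖((q - c) - ⟪q - c, u⟫ • u) - ((p - c) - ⟪p - c, u⟫ • u)‖ ≤ 2 * r :=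
      le_trans (norm_sub_le _ _) (by linarith)
    have hw2 : ((q - c) - ⟪q - c, u⟫ • u) - ((p - c) - ⟪p - c, u⟫ • u)
        = (q - p) - ⟪q - p, u⟫ • u := by
      have h3 : ⟪q - p, u⟫ = ⟪q - c, u⟫ - ⟪p - c, u⟫ := by
        rw [← inner_sub_left]
        congr 1
        abel
      rw [h3, sub_smul]
      abel
    rw [hw2] at hw
    have hw2n : ‖(q - p) - ⟪q - p, u⟫ • u‖ ^ 2 = ‖q - p‖ ^ 2 - ⟪q - p, u⟫ ^ 2 :=
      proj_contr' u (q - p) hu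
    have hQun : ‖u - ⟪u, v⟫ • v‖ ^ 2 = 1 - ⟪u, v⟫ ^ 2 := by
      rw [proj_contr' v u hv, hu]
      norm_num
    have huv : ⟪u, v⟫ = ‖q - p‖⁻¹ * ⟪q - p, u⟫ := by
      rw [hv_def, real_inner_smul_right, real_inner_comm]
    have hkey : (‖q - p‖ * ‖u - ⟪u, v⟫ • v‖) ^ 2
        = ‖(q - p) - ⟪q - p, u⟫ • u‖ ^ 2 := by
      rw [mul_pow, hQun, hw2n, huv]
      field_simp
    nlinarith [norm_nonneg ((q - p) - ⟪q - p, u⟫ • u),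
      norm_nonneg (u - ⟪u, v⟫ • v),
      mul_nonneg hbn.le (norm_nonneg (u - ⟪u, v⟫ • v))]
  -- per-point bound
  apply Finset.sup'_le
  intro s hs
  have hdecomp : s - p
      = ((s - c) - ⟪s - c, u⟫ • u) + ⟪s - p, u⟫ • u - ((p - c) - ⟪p - c, u⟫ • u) := by
    have h3 : ⟪s - p, u⟫ = ⟪s - c, u⟫ - ⟪p - c, u⟫ := by
      rw [← inner_sub_left]
      congr 1
      abel
    rw [h3, sub_smul]
    abel
  have hta : |⟪s - p, u⟫| * ‖u - ⟪u, v⟫ • v‖ ≤ 2 * r := by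
    have h1 : |⟪s - p, u⟫| ≤ ‖s - p‖ := by
      calc |⟪s - p, u⟫| ≤ ‖s - p‖ * ‖u‖ := abs_real_inner_le_norm _ _
        _ = ‖s - p‖ := by rw [hu, mul_one]
    have h2 : ‖s - p‖ ≤ ‖q - p‖ := by
      have h4 := hfar s hs
      rwa [dist_eq_norm, dist_eq_norm] at h4
    calc |⟪s - p, u⟫| * ‖u - ⟪u, v⟫ • v‖
        ≤ ‖q - p‖ * ‖u - ⟪u, v⟫ • v‖ :=
          mul_le_mul_of_nonneg_right (h1.trans h2) (norm_nonneg _)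
      _ ≤ 2 * r := hQu
  have hkey : ‖(s - p) - ⟪s - p, v⟫ • v‖ ≤ 4 * r := by
    rw [hdecomp]
    exact aux_key u v _ _ r _ hv (hproj s hs) (hproj p hp) hta
  -- the comparison point lies on the line through p and q
  have hpmem : p ∈ affineSpan ℝ ({p, q} : Set (EuclideanSpace ℝ (Fin d))) :=
    mem_affineSpan ℝ (by simp)
  have hqmem : q ∈ affineSpan ℝ ({p, q} : Set (EuclideanSpace ℝ (Fin d))) :=
    mem_affineSpan ℝ (by simp)
  have hdirpq : q - p ∈ (affineSpan ℝ ({p, q} : Set (EuclideanSpace ℝ (Fin d)))).direction := by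
    simpa [vsub_eq_sub] using AffineSubspace.vsub_mem_direction hqmem hpmem
  have hymem : (⟪s - p, v⟫ • v) + p
      ∈ affineSpan ℝ ({p, q} : Set (EuclideanSpace ℝ (Fin d))) := by
    have h1 : ⟪s - p, v⟫ • v
        ∈ (affineSpan ℝ ({p, q} : Set (EuclideanSpace ℝ (Fin d)))).direction := by
      rw [hv_def, smul_smul]
      exact Submodule.smul_mem _ _ hdirpq
    simpa [vadd_eq_add] using AffineSubspace.vadd_mem_of_mem_direction h1 hpmem
  calc infDist s ((affineSpan ℝ ({p, q} : Set (EuclideanSpace ℝ (Fin d)))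
          : AffineSubspace ℝ (EuclideanSpace ℝ (Fin d))) : Set (EuclideanSpace ℝ (Fin d)))
      ≤ dist s ((⟪s - p, v⟫ • v) + p) := infDist_le_dist_of_mem hymem
    _ = ‖(s - p) - ⟪s - p, v⟫ • v‖ := by rw [dist_eq_norm]; congr 1; abel
    _ ≤ 4 * r := hkey
end
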